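/- Let X be a smooth cubic surface over a field k, obtained as the blow-up of P² along a k-line L' and a Galois orbit R₁,…,R₅ of 5 pairwise skew lines defined over a degree 5 cyclic extension (together forming a six of pairwise skew lines). Let λ₀ ∈ Pic(X) be the pullback of a line in P². Then the strict transform of the conic through the 5 blown-up points corresponding to the Rᵢ is a k-line on X with class 2λ₀ - (R₁ + ⋯ + R₅), and consequently 2λ₀ ∈ Δ. -/

import Mathlib

/-!
Model: the Picard group of a smooth cubic surface over a separably closed
field is identified with `ℤ⁷ = Fin 7 → ℤ` with its standard basis
`λ₀, L₁, …, L₆` (pullback of a line and the six exceptional classes),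
intersection form `picInter`, canonical class `KX = -3λ₀ + L₁ + ⋯ + L₆`.
The classes of the 27 lines are exactly the classes `l` with
`l·l = -1` and `KX·l = -1`.
-/

def picInter (a b : Fin 7 → ℤ) : ℤ := a 0 * b 0 - ∑ i : Fin 6, a i.succ * b i.succ

def KX : Fin 7 → ℤ := ![-3, 1, 1, 1, 1, 1, 1]

def IsLineClass (l : Fin 7 → ℤ) : Prop := picInter l l = -1 ∧ picInter KX l = -1

/-!
Galois model: for a smooth cubic surface `X` over a field `k`, split by a
finite Galois extension with group `G`, the Galois action on the geometric
Picard group is a homomorphism `ρ : G →* AddAut (Fin 7 → ℤ)` preserving the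
intersection form, the canonical class and the set of line classes.
`Pic(X)` is identified with the fixed subgroup `fixedSubgroup ρ`, and the
subgroup `Δ ⊆ Pic(X)` generated by norms (from finite separable extensions)
of lines is `Delta ρ`: the subgroup generated by the Galois-orbit sums
(= norms from the field of definition) of the 27 line classes.
-/

/-- The multiplicative group structure that older Mathlib put on `AddAut A`
(`mul g h = h.trans g`); current Mathlib makes `AddAut A` an additive group instead. -/
instance addAutGroupOld (A : Type*) [Add A] : Group (AddAut A) where
  mul g h := AddEquiv.trans h g
  one := AddEquiv.refl _
  inv := AddEquiv.symm
  mul_assoc _ _ _ := rfl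
  one_mul _ := rfl
  mul_one _ := rfl
  inv_mul_cancel := AddEquiv.self_trans_symm

variable {G : Type*} [Group G] [Fintype G]

noncomputable def normOrbit (ρ : G →* AddAut (Fin 7 → ℤ)) (l : Fin 7 → ℤ) : Fin 7 → ℤ :=
  ∑ m ∈ Finset.image (fun g => ρ g l) Finset.univ, m

noncomputable def Delta (ρ : G →* AddAut (Fin 7 → ℤ)) : AddSubgroup (Fin 7 → ℤ) :=
  AddSubgroup.closure { x | ∃ l, IsLineClass l ∧ x = normOrbit ρ l }

def fixedSubgroup (ρ : G →* AddAut (Fin 7 → ℤ)) : AddSubgroup (Fin 7 → ℤ) where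
  carrier := {x | ∀ g, ρ g x = x}
  zero_mem' := fun g => map_zero (ρ g)
  add_mem' := fun {a b} ha hb g => by rw [map_add, ha g, hb g]
  neg_mem' := fun {a} ha g => by rw [map_neg, ha g]

/-!
The conic class `C = 2λ₀ - (R₁ + ⋯ + R₅)` satisfies `C·C = -1` and `K·C = -1`, so it is a line
class; it is Galois-fixed because `λ₀` is and `R₁ + ⋯ + R₅` is an orbit sum. A fixed line class is
its own norm, so `C ∈ Δ`; the orbit sum `R₁ + ⋯ + R₅` is the norm of `R₁`, so it lies in `Δ` as
well, and hence so does `2λ₀ = C + (R₁ + ⋯ + R₅)`.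
-/

theorem addAutGroupOld_mul_apply {A : Type*} [Add A] (e f : AddAut A) (x : A) :
    (e * f) x = e (f x) :=
  rfl

section Norms

variable (ρ : G →* AddAut (Fin 7 → ℤ))

theorem apply_normOrbit (g : G) (l : Fin 7 → ℤ) : ρ g (normOrbit ρ l) = normOrbit ρ l := by
  classical
  set orbit := Finset.image (fun h => ρ h l) Finset.univ with orbit_def
  have horbit : orbit.image (ρ g) = orbit := by
    conv_rhs => rw [orbit_def, ← Finset.image_univ_equiv (Equiv.mulLeft g)]
    simp only [orbit, Finset.image_image, Function.comp_def, Equiv.coe_mulLeft, map_mul,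
      addAutGroupOld_mul_apply]
  calc ρ g (normOrbit ρ l) = ∑ m ∈ orbit, ρ g m := map_sum _ _ _
    _ = ∑ m ∈ orbit.image (ρ g), m := by
      rw [Finset.sum_image fun x _ y _ h => (ρ g).injective h]
    _ = normOrbit ρ l := by rw [horbit]; rfl

theorem normOrbit_eq_self_of_fixed {x : Fin 7 → ℤ} (hx : ∀ g, ρ g x = x) : normOrbit ρ x = x := by
  rw [normOrbit, Finset.image_congr (g := fun _ => x) fun g _ => hx g,
    Finset.image_const Finset.univ_nonempty, Finset.sum_singleton]

theorem normOrbit_eq_sum_of_orbit_eq {n : ℕ} {v : Fin n → Fin 7 → ℤ} (hv : Function.Injective v)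
    {l : Fin 7 → ℤ}
    (horbit : Finset.image (fun g => ρ g l) Finset.univ = Finset.image v Finset.univ) :
    normOrbit ρ l = ∑ i, v i := by
  rw [normOrbit, horbit, Finset.sum_image fun i _ j _ h => hv h]

theorem normOrbit_mem_Delta {l : Fin 7 → ℤ} (hl : IsLineClass l) :
    normOrbit ρ l ∈ Delta ρ :=
  AddSubgroup.subset_closure ⟨l, hl, rfl⟩

theorem mem_Delta_of_isLineClass_of_fixed {l : Fin 7 → ℤ} (hl : IsLineClass l)
    (hfix : ∀ g, ρ g l = l) : l ∈ Delta ρ :=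
  normOrbit_eq_self_of_fixed ρ hfix ▸ normOrbit_mem_Delta ρ hl

end Norms

theorem isLineClass_single_succ (i : Fin 6) : IsLineClass (Pi.single i.succ 1) := by
  fin_cases i <;> exact ⟨by decide, by decide⟩

theorem isLineClass_conic :
    IsLineClass ((2 : ℤ) • Pi.single 0 1 - ∑ i : Fin 5, Pi.single (i.addNat 2 : Fin 7) 1) :=
  ⟨by decide, by decide⟩

/-- Let `X` be the blow-up of `ℙ²` in a rational point (exceptional line
`L' = e₁`) and a Galois orbit of 5 points (exceptional lines
`R₁, …, R₅ = e₂, …, e₆`) defined over a degree 5 cyclic extension, the six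
exceptional curves being pairwise skew.  Then the strict transform of the
conic through the 5 conjugate points is a `k`-line with class
`2λ₀ - (R₁ + ⋯ + R₅)`, and consequently `2λ₀ ∈ Δ`. -/
theorem stmt16
    (ρ : G →* AddAut (Fin 7 → ℤ))
    (R : Fin 5 → Fin 7 → ℤ)
    (hR : ∀ i : Fin 5, R i = Pi.single (⟨i.1 + 2, by omega⟩ : Fin 7) 1)
    (hlam : ∀ g : G, ρ g (Pi.single 0 1) = Pi.single 0 1)
    (horbit : Finset.image (fun g : G => ρ g (R 0)) Finset.univ =
      Finset.image R Finset.univ) :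
    IsLineClass ((2 : ℤ) • Pi.single 0 1 - ∑ i, R i) ∧
      (∀ g : G, ρ g ((2 : ℤ) • Pi.single 0 1 - ∑ i, R i) =
        (2 : ℤ) • Pi.single 0 1 - ∑ i, R i) ∧
      ((2 : ℤ) • Pi.single 0 1 - ∑ i, R i) ∈ Delta ρ ∧
      ((2 : ℤ) • (Pi.single 0 1 : Fin 7 → ℤ)) ∈ Delta ρ := by
  have hR_inj : Function.Injective R := by
    rw [funext hR]
    decide
  have hsum : normOrbit ρ (R 0) = ∑ i, R i := normOrbit_eq_sum_of_orbit_eq ρ hR_inj horbit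
  have hsum_mem : ∑ i, R i ∈ Delta ρ :=
    hsum ▸ normOrbit_mem_Delta ρ (hR 0 ▸ isLineClass_single_succ 1)
  set C := (2 : ℤ) • Pi.single 0 1 - ∑ i, R i
  have hC_line : IsLineClass C := by
    simp only [C, hR]
    exact isLineClass_conic
  have hC_fixed : ∀ g : G, ρ g C = C := fun g => by
    rw [map_sub, map_zsmul, hlam, ← hsum, apply_normOrbit, hsum]
  have hC_mem := mem_Delta_of_isLineClass_of_fixed ρ hC_line hC_fixed
  refine ⟨hC_line, hC_fixed, hC_mem, ?_⟩
  simpa only [C, sub_add_cancel] using add_mem hC_mem hsum_mem
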